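/- arXiv:1706.01431 — 2 statements merged into one kernel-verified Lean document; each statement's English description precedes it below -/
import Mathlib

section
/- Let G be a finite group and let H ∈ CD(G) with H < G a proper subgroup. Then the normal closure H^G = ⟨H^x : x ∈ G⟩ is a proper subgroup of G. -/
open Pointwise

/-- The Chermak-Delgado measure of a subgroup: `m_G(H) = |H| * |C_G(H)|`. -/
noncomputable def cdMeasure {G : Type*} [Group G] (H : Subgroup G) : Nat :=
  Nat.card H * Nat.card (Subgroup.centralizer (H : Set G))

/-- The Chermak-Delgado lattice of `G`: the subgroups of maximal Chermak-Delgado measure. -/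
def CD (G : Type*) [Group G] : Set (Subgroup G) :=
  {H | ∀ K : Subgroup G, cdMeasure K ≤ cdMeasure H}

/-- The conjugate subgroup `H^x = x⁻¹ H x`. -/
def conjSub {G : Type*} [Group G] (H : Subgroup G) (x : G) : Subgroup G :=
  Subgroup.map ((MulAut.conj x⁻¹).toMonoidHom) H

/-!
Among the proper members of `CD G` containing `H` pick a maximal one, `M`. Conjugation preserves
the Chermak-Delgado measure, so `M^x ∈ CD G` for every `x`. Comparing
`m(H) m(K) = |HK| |H ∩ K| |C(H) C(K)| |C(H) ∩ C(K)|` with `m(H ⊔ K) m(H ⊓ K)` shows that the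
join of two members of `CD G` is again a member and equals their product set. As no group is the
product set of a proper subgroup and one of its conjugates, `M ⊔ M^x` is proper, hence equal to
`M` by maximality. So `M` is normal, and it contains every conjugate of `H`.
-/

namespace Subgroup

variable {G : Type*} [Group G]

abbrev mulInvAction (A B : Subgroup G) : MulAction (A × B) G where
  smul p g := p.1 * g * (p.2 : G)⁻¹
  one_smul g := show (1 : G) * g * 1⁻¹ = g by simp
  mul_smul p q g := show ((p.1 * q.1 : A) : G) * g * ((p.2 * q.2 : B) : G)⁻¹ =
      p.1 * (q.1 * g * (q.2 : G)⁻¹) * (p.2 : G)⁻¹ by simp [mul_assoc]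

open MulAction in
theorem card_mul_mul_card_inf (A B : Subgroup G) :
    Nat.card ((A : Set G) * (B : Set G)) * Nat.card (A ⊓ B : Subgroup G) =
      Nat.card A * Nat.card B := by
  let := mulInvAction A B
  have smul_one (p : A × B) : p • (1 : G) = p.1 * (p.2 : G)⁻¹ := by
    show _ * 1 * _ = _
    rw [mul_one]
  have orbit_one : orbit (A × B) (1 : G) = (A : Set G) * B := by
    ext g
    simp only [mem_orbit_iff, smul_one, Prod.exists, Subtype.exists, Set.mem_mul, SetLike.mem_coe]
    constructor
    · rintro ⟨a, ha, b, hb, rfl⟩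
      exact ⟨a, ha, b⁻¹, inv_mem hb, rfl⟩
    · rintro ⟨a, ha, b, hb, rfl⟩
      exact ⟨a, ha, b⁻¹, inv_mem hb, by rw [inv_inv]⟩
  have mem_stabilizer_one (p : A × B) : p ∈ stabilizer (A × B) (1 : G) ↔ (p.1 : G) = p.2 := by
    rw [mem_stabilizer_iff, smul_one, mul_inv_eq_one]
  have stabilizer_one : stabilizer (A × B) (1 : G) ≃ (A ⊓ B : Subgroup G) :=
    { toFun p := ⟨p.1.1, p.1.1.2, (mem_stabilizer_one p).1 p.2 ▸ p.1.2.2⟩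
      invFun c := ⟨(⟨c, c.2.1⟩, ⟨c, c.2.2⟩), (mem_stabilizer_one _).2 rfl⟩
      left_inv p := by ext; exacts [rfl, (mem_stabilizer_one p).1 p.2]
      right_inv c := rfl }
  rw [← orbit_one, ← Nat.card_congr stabilizer_one, ← Nat.card_prod, ← Nat.card_prod,
    Nat.card_congr (orbitProdStabilizerEquivGroup _ _)]

theorem coe_mul_subset_coe_sup (H K : Subgroup G) :
    (H : Set G) * (K : Set G) ⊆ (H ⊔ K : Subgroup G) :=
  Set.mul_subset_iff.2 fun _ ha _ hb =>
    mul_mem (le_sup_left (a := H) ha) (le_sup_right (a := H) hb)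

theorem centralizer_sup (H K : Subgroup G) :
    centralizer ((H ⊔ K : Subgroup G) : Set G) = centralizer H ⊓ centralizer K := by
  rw [sup_eq_closure, centralizer_closure]
  ext g
  simp [mem_centralizer_iff, or_imp, forall_and]

theorem centralizer_map_mulEquiv {G' : Type*} [Group G'] (f : G ≃* G') (H : Subgroup G) :
    centralizer ((H.map f.toMonoidHom : Subgroup G') : Set G') =
      (centralizer (H : Set G)).map f.toMonoidHom := by
  ext y
  obtain ⟨x, rfl⟩ := f.surjective y
  simp [mem_centralizer_iff, ← map_mul, f.injective.eq_iff]

end Subgroup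

section ChermakDelgado

open Subgroup

variable {G : Type*} [Group G]

theorem cdMeasure_map_mulEquiv {G' : Type*} [Group G'] (f : G ≃* G') (H : Subgroup G) :
    cdMeasure (H.map f.toMonoidHom) = cdMeasure H := by
  rw [cdMeasure, cdMeasure, centralizer_map_mulEquiv, card_map_of_injective f.injective,
    card_map_of_injective f.injective]

theorem mem_conjSub {H : Subgroup G} {x g : G} : g ∈ conjSub H x ↔ x * g * x⁻¹ ∈ H := by
  rw [conjSub, mem_map_equiv]
  simp [mul_assoc]

theorem conjSub_mono {H K : Subgroup G} (hHK : H ≤ K) (x : G) : conjSub H x ≤ conjSub K x :=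
  map_mono hHK

theorem conjSub_eq_self {H : Subgroup G} {x : G} (hx : x ∈ H) : conjSub H x = H := by
  ext g
  rw [mem_conjSub, mul_mem_cancel_right (inv_mem hx), mul_mem_cancel_left hx]

theorem conjSub_mem_CD {H : Subgroup G} (hH : H ∈ CD G) (x : G) : conjSub H x ∈ CD G :=
  fun K => (hH K).trans (cdMeasure_map_mulEquiv _ H).ge

theorem eq_top_of_coe_mul_conjSub_eq_univ {L : Subgroup G} {x : G}
    (h : (L : Set G) * (conjSub L x : Set G) = Set.univ) : L = ⊤ := by
  obtain ⟨a, ha, b, hb, rfl⟩ : x ∈ (L : Set G) * (conjSub L x : Set G) := h ▸ Set.mem_univ x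
  have hx : a * b ∈ L := by
    convert mul_mem (mem_conjSub.1 hb) ha using 1
    group
  rw [conjSub_eq_self hx] at h
  exact eq_top_iff.2 fun g _ => by
    obtain ⟨c, hc, d, hd, rfl⟩ : g ∈ (L : Set G) * (L : Set G) := h ▸ Set.mem_univ g
    exact mul_mem hc hd

variable [Finite G]

theorem cdMeasure_mul_cdMeasure_mul_card_sup_le (H K : Subgroup G) :
    cdMeasure H * cdMeasure K * Nat.card (H ⊔ K : Subgroup G) ≤
      cdMeasure (H ⊔ K) * cdMeasure (H ⊓ K) * Nat.card ((H : Set G) * (K : Set G)) := by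
  set CH := centralizer (H : Set G)
  set CK := centralizer (K : Set G)
  have hC : (CH : Set G) * (CK : Set G) ⊆ centralizer ((H ⊓ K : Subgroup G) : Set G) :=
    Set.mul_subset_iff.2 fun _ ha _ hb =>
      mul_mem (centralizer_le inf_le_left ha) (centralizer_le inf_le_right hb)
  calc cdMeasure H * cdMeasure K * Nat.card (H ⊔ K : Subgroup G)
      = Nat.card ((H : Set G) * (K : Set G)) * Nat.card (H ⊓ K : Subgroup G) *
          (Nat.card ((CH : Set G) * (CK : Set G)) * Nat.card (CH ⊓ CK : Subgroup G)) *
          Nat.card (H ⊔ K : Subgroup G) := by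
        rw [card_mul_mul_card_inf, card_mul_mul_card_inf, cdMeasure, cdMeasure]
        ring
    _ ≤ Nat.card ((H : Set G) * (K : Set G)) * Nat.card (H ⊓ K : Subgroup G) *
          (Nat.card (centralizer ((H ⊓ K : Subgroup G) : Set G)) *
            Nat.card (CH ⊓ CK : Subgroup G)) * Nat.card (H ⊔ K : Subgroup G) := by
        gcongr
        exact Nat.card_mono (Set.toFinite _) hC
    _ = _ := by
        rw [cdMeasure, cdMeasure, centralizer_sup]
        ring

theorem le_cdMeasure_sup_and_card_sup_le_card_mul {H K : Subgroup G}
    (hH : H ∈ CD G) (hK : K ∈ CD G) :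
    cdMeasure H ≤ cdMeasure (H ⊔ K) ∧
      Nat.card (H ⊔ K : Subgroup G) ≤ Nat.card ((H : Set G) * (K : Set G)) := by
  have key := cdMeasure_mul_cdMeasure_mul_card_sup_le H K
  rw [le_antisymm (hH K) (hK H)] at key
  have hsup := hH (H ⊔ K)
  have hinf := hH (H ⊓ K)
  have hmul : Nat.card ((H : Set G) * (K : Set G)) ≤ Nat.card (H ⊔ K : Subgroup G) :=
    Nat.card_mono (Set.toFinite _) (coe_mul_subset_coe_sup H K)
  have hm : 0 < cdMeasure H := Nat.mul_pos Nat.card_pos Nat.card_pos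
  have hcard : 0 < Nat.card (H ⊔ K : Subgroup G) := Nat.card_pos
  constructor <;> by_contra! h <;> refine (key.trans_lt ?_).false
  · calc cdMeasure (H ⊔ K) * cdMeasure (H ⊓ K) * Nat.card ((H : Set G) * (K : Set G))
        ≤ cdMeasure (H ⊔ K) * cdMeasure H * Nat.card (H ⊔ K : Subgroup G) := by gcongr
      _ < cdMeasure H * cdMeasure H * Nat.card (H ⊔ K : Subgroup G) := by gcongr
  · calc cdMeasure (H ⊔ K) * cdMeasure (H ⊓ K) * Nat.card ((H : Set G) * (K : Set G))
        ≤ cdMeasure H * cdMeasure H * Nat.card ((H : Set G) * (K : Set G)) := by gcongr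
      _ < cdMeasure H * cdMeasure H * Nat.card (H ⊔ K : Subgroup G) := by gcongr

theorem sup_mem_CD {H K : Subgroup G} (hH : H ∈ CD G) (hK : K ∈ CD G) : H ⊔ K ∈ CD G :=
  fun L => (hH L).trans (le_cdMeasure_sup_and_card_sup_le_card_mul hH hK).1

theorem coe_mul_eq_coe_sup_of_mem_CD {H K : Subgroup G} (hH : H ∈ CD G) (hK : K ∈ CD G) :
    (H : Set G) * (K : Set G) = (H ⊔ K : Subgroup G) := by
  refine Set.eq_of_subset_of_ncard_le (coe_mul_subset_coe_sup H K) ?_ (Set.toFinite _)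
  rw [← Nat.card_coe_set_eq, ← Nat.card_coe_set_eq]
  exact (le_cdMeasure_sup_and_card_sup_le_card_mul hH hK).2

theorem conjSub_le_of_maximal {M : Subgroup G} (hM : Maximal (fun K => K ∈ CD G ∧ K < ⊤) M)
    (x : G) : conjSub M x ≤ M := by
  have hMx := conjSub_mem_CD hM.prop.1 x
  have hsup : M ⊔ conjSub M x < ⊤ := by
    refine lt_top_iff_ne_top.2 fun htop =>
      hM.prop.2.ne (eq_top_of_coe_mul_conjSub_eq_univ (x := x) ?_)
    rw [coe_mul_eq_coe_sup_of_mem_CD hM.prop.1 hMx, htop, coe_top]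
  exact le_sup_right.trans (hM.le_of_ge ⟨sup_mem_CD hM.prop.1 hMx, hsup⟩ le_sup_left)

end ChermakDelgado

theorem stmt2 {G : Type*} [Group G] [Fintype G] (H : Subgroup G)
    (hH : H ∈ CD G) (hlt : H < ⊤) :
    (⨆ x : G, conjSub H x) < ⊤ := by
  obtain ⟨M, hHM, hM⟩ :=
    (Set.toFinite {K : Subgroup G | K ∈ CD G ∧ K < ⊤}).exists_le_maximal ⟨hH, hlt⟩
  calc ⨆ x : G, conjSub H x ≤ M :=
        iSup_le fun x => (conjSub_mono hHM x).trans (conjSub_le_of_maximal hM x)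
    _ < ⊤ := hM.prop.2
end

section
/- Let G be a finite group with 1 ∈ CD(G). Then G is indecomposable (G cannot be written as an internal direct product H × K with both H and K nontrivial) if and only if CD(G) is an indecomposable lattice (CD(G), ordered by inclusion, is not order-isomorphic to a Cartesian product L₁ × L₂ of lattices in which both L₁ and L₂ have more than one element). -/
open Pointwise

/-!
Because `1 ∈ CD(G)`, the maximal measure is `|G|`, and `CD(G)` is a sublattice of the subgroup
lattice containing `1` and `G`. Every `M ∈ CD(G)` equals its double centralizer, since
`m(C(M)) ≤ m(M)` and `M ≤ C(C(M))`.

If `G = H × K`, then `H, K ∈ CD(G)`. For `M ∈ CD(G)` and `hk ∈ M`, the factor `h` commutes with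
everything in `C(M)`, so `h ∈ C(C(M)) = M`. Hence `M = (M ∩ H)(M ∩ K)` and
`CD(G) ≅ [1, H] × [1, K]`.

Conversely, given `CD(G) ≅ L₁ × L₂`, take `H, K` corresponding to `(⊤, ⊥)` and `(⊥, ⊤)`. Each is
the only complement of the other in `CD(G)`. Conjugation by `k ∈ K` permutes `CD(G)` and fixes
`K`, so it fixes `H`; thus `H` is normal, and so is `K`.
-/

open Subgroup

theorem exists_isCompl_unique_of_orderIso_prod {α β γ : Type*} [Lattice α] [BoundedOrder α]
    [Lattice β] [Lattice γ] [Nontrivial β] [Nontrivial γ] (e : α ≃o β × γ) :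
    ∃ a b : α, a ≠ ⊥ ∧ b ≠ ⊥ ∧ IsCompl a b ∧ (∀ c, IsCompl c b → c = a) ∧
      ∀ c, IsCompl a c → c = b := by
  let _ : BoundedOrder β :=
    { top := (e ⊤).1, bot := (e ⊥).1
      le_top x := (e.symm_apply_le.mp (le_top (a := e.symm (x, (e ⊤).2)))).1
      bot_le x := (e.le_symm_apply.mp (bot_le (a := e.symm (x, (e ⊥).2)))).1 }
  let _ : BoundedOrder γ :=
    { top := (e ⊤).2, bot := (e ⊥).2
      le_top x := (e.symm_apply_le.mp (le_top (a := e.symm ((e ⊤).1, x)))).2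
      bot_le x := (e.le_symm_apply.mp (bot_le (a := e.symm ((e ⊥).1, x)))).2 }
  have isCompl_iff {x y : α} : IsCompl x y ↔ IsCompl (e x).1 (e y).1 ∧ IsCompl (e x).2 (e y).2 :=
    e.isCompl_iff.trans Prod.isCompl_iff
  refine ⟨e.symm (⊤, ⊥), e.symm (⊥, ⊤), ?_, ?_, ?_, fun c hc => ?_, fun c hc => ?_⟩
  · rw [Ne, e.symm_apply_eq, e.map_bot]
    exact fun h => top_ne_bot (congrArg Prod.fst h)
  · rw [Ne, e.symm_apply_eq, e.map_bot]
    exact fun h => top_ne_bot (congrArg Prod.snd h)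
  · simp only [isCompl_iff, e.apply_symm_apply]
    exact ⟨isCompl_top_bot, isCompl_bot_top⟩
  · simp only [isCompl_iff, e.apply_symm_apply] at hc
    rw [e.eq_symm_apply]
    exact Prod.ext (eq_top_of_isCompl_bot hc.1) (eq_bot_of_isCompl_top hc.2)
  · simp only [isCompl_iff, e.apply_symm_apply] at hc
    rw [e.eq_symm_apply]
    exact Prod.ext (eq_bot_of_top_isCompl hc.1) (eq_top_of_bot_isCompl hc.2)

def orderIsoIicProdIic {α : Type*} [Lattice α] {a b : α}
    (h_split : ∀ x, x ⊓ a ⊔ x ⊓ b = x)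
    (h_inf_left : ∀ y ≤ a, ∀ z ≤ b, (y ⊔ z) ⊓ a = y)
    (h_inf_right : ∀ y ≤ a, ∀ z ≤ b, (y ⊔ z) ⊓ b = z) :
    α ≃o Set.Iic a × Set.Iic b where
  toFun x := (⟨x ⊓ a, inf_le_right⟩, ⟨x ⊓ b, inf_le_right⟩)
  invFun p := p.1 ⊔ p.2
  left_inv := h_split
  right_inv p := Prod.ext (Subtype.ext (h_inf_left _ p.1.2 _ p.2.2))
    (Subtype.ext (h_inf_right _ p.1.2 _ p.2.2))
  map_rel_iff' {x y} := by
    refine ⟨fun h => ?_, fun h => ⟨inf_le_inf_right a h, inf_le_inf_right b h⟩⟩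
    rw [← h_split x, ← h_split y]
    exact sup_le_sup h.1 h.2

section GroupTheory

variable {G : Type*} [Group G]

theorem Subgroup.card_mul_card_le_card_sup_mul_card_inf [Finite G] (H K : Subgroup G) :
    Nat.card H * Nat.card K ≤ Nat.card ↥(H ⊔ K) * Nat.card ↥(H ⊓ K) := by
  have hK := relIndex_mul_relIndex ⊥ (H ⊓ K) K bot_le inf_le_right
  have hHK := relIndex_mul_relIndex ⊥ H (H ⊔ K) bot_le le_sup_left
  rw [relIndex_bot_left, relIndex_bot_left, inf_relIndex_right] at hK
  rw [relIndex_bot_left, relIndex_bot_left] at hHK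
  have hle : H.relIndex K ≤ H.relIndex (H ⊔ K) :=
    relIndex_le_of_le_right le_sup_right index_ne_zero_of_finite
  calc Nat.card H * Nat.card K = Nat.card H * H.relIndex K * Nat.card ↥(H ⊓ K) := by
        rw [← hK]; ring
    _ ≤ Nat.card H * H.relIndex (H ⊔ K) * Nat.card ↥(H ⊓ K) := by gcongr
    _ = Nat.card ↥(H ⊔ K) * Nat.card ↥(H ⊓ K) := by rw [hHK]

theorem Subgroup.card_sup_le_card_mul_card [Finite G] (H K : Subgroup G) [K.Normal] :
    Nat.card ↥(H ⊔ K) ≤ Nat.card H * Nat.card K := by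
  change Nat.card ((H ⊔ K : Subgroup G) : Set G) ≤ Nat.card (H : Set G) * Nat.card (K : Set G)
  rw [mul_normal]
  exact Set.natCard_mul_le

theorem Subgroup.sup_inf_eq_of_le_of_le {A B H K : Subgroup G} [K.Normal] (hHK : H ⊓ K = ⊥)
    (hA : A ≤ H) (hB : B ≤ K) : (A ⊔ B) ⊓ H = A := by
  refine le_antisymm ?_ (le_inf le_sup_left hA)
  have : ((A ⊔ K) ⊓ H : Subgroup G) = A := by
    apply SetLike.coe_injective
    rw [coe_inf, mul_normal, ← mul_inf_assoc _ _ _ hA, inf_comm, hHK, coe_bot, Set.singleton_one,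
      mul_one]
  exact (inf_le_inf_right H (sup_le_sup_left hB A)).trans this.le

theorem Subgroup.commute_of_commute_mul {H K : Subgroup G} [H.Normal] [K.Normal] (hHK : H ⊓ K = ⊥)
    {h k x : G} (hh : h ∈ H) (hk : k ∈ K) (hx : Commute x (h * k)) : Commute x h := by
  have hc : h⁻¹ * (x * h * x⁻¹) = k * (x * k⁻¹ * x⁻¹) := by
    rw [eq_mul_inv_of_mul_eq (by rw [mul_assoc]; exact hx.eq : x * h * k = h * k * x)]
    group
  have hK : k * (x * k⁻¹ * x⁻¹) ∈ K := mul_mem hk (‹K.Normal›.conj_mem _ (inv_mem hk) x)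
  rw [← hc] at hK
  have hmem : h⁻¹ * (x * h * x⁻¹) ∈ H ⊓ K :=
    mem_inf.mpr ⟨mul_mem (inv_mem hh) (‹H.Normal›.conj_mem h hh x), hK⟩
  rw [hHK, mem_bot, inv_mul_eq_one, eq_mul_inv_iff_mul_eq] at hmem
  exact hmem.symm

end GroupTheory

section ChermakDelgado

variable {G : Type*} [Group G]

theorem cdMeasure_bot : cdMeasure (⊥ : Subgroup G) = Nat.card G := by
  rw [cdMeasure, card_bot, one_mul, coe_bot,
    centralizer_eq_top_iff_subset.mpr (Set.singleton_subset_iff.mpr (one_mem _)), card_top]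

theorem cdMeasure_pos [Finite G] (H : Subgroup G) : 0 < cdMeasure H :=
  Nat.mul_pos Nat.card_pos Nat.card_pos

theorem cdMeasure_le_cdMeasure_map {G' : Type*} [Group G'] [Finite G'] (e : G ≃* G')
    (H : Subgroup G) : cdMeasure H ≤ cdMeasure (H.map (e : G →* G')) := by
  rw [cdMeasure, cdMeasure, card_map_of_injective e.injective]
  gcongr
  calc Nat.card (centralizer (H : Set G))
      = Nat.card ((centralizer (H : Set G)).map (e : G →* G')) :=
        (card_map_of_injective e.injective).symm
    _ ≤ _ := card_le_of_le (by rw [coe_map]; exact map_centralizer_le_centralizer_image _ _)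

theorem map_mem_CD [Finite G] {M : Subgroup G} (hM : M ∈ CD G) (e : G ≃* G) :
    M.map (e : G →* G) ∈ CD G :=
  fun K => (hM K).trans (cdMeasure_le_cdMeasure_map e M)

theorem cdMeasure_mul_cdMeasure_le [Finite G] (M N : Subgroup G) :
    cdMeasure M * cdMeasure N ≤ cdMeasure (M ⊓ N) * cdMeasure (M ⊔ N) := by
  have hsup : centralizer (M : Set G) ⊔ centralizer (N : Set G) ≤
      centralizer ((M ⊓ N : Subgroup G) : Set G) :=
    sup_le (centralizer_le inf_le_left) (centralizer_le inf_le_right)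
  have hinf : centralizer (M : Set G) ⊓ centralizer (N : Set G) ≤
      centralizer ((M ⊔ N : Subgroup G) : Set G) :=
    le_centralizer_iff.mpr (sup_le (le_centralizer_iff.mp inf_le_left)
      (le_centralizer_iff.mp inf_le_right))
  have hC := (card_mul_card_le_card_sup_mul_card_inf (centralizer (M : Set G))
    (centralizer (N : Set G))).trans (Nat.mul_le_mul (card_le_of_le hsup) (card_le_of_le hinf))
  calc cdMeasure M * cdMeasure N
      = Nat.card M * Nat.card N *
          (Nat.card (centralizer (M : Set G)) * Nat.card (centralizer (N : Set G))) := by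
        rw [cdMeasure, cdMeasure]; ring
    _ ≤ Nat.card ↥(M ⊔ N) * Nat.card ↥(M ⊓ N) *
          (Nat.card (centralizer ((M ⊓ N : Subgroup G) : Set G)) *
            Nat.card (centralizer ((M ⊔ N : Subgroup G) : Set G))) :=
        Nat.mul_le_mul (card_mul_card_le_card_sup_mul_card_inf M N) hC
    _ = cdMeasure (M ⊓ N) * cdMeasure (M ⊔ N) := by rw [cdMeasure, cdMeasure]; ring

theorem inf_mem_CD_and_sup_mem_CD [Finite G] {M N : Subgroup G} (hM : M ∈ CD G)
    (hN : N ∈ CD G) : M ⊓ N ∈ CD G ∧ M ⊔ N ∈ CD G := by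
  have hNM : cdMeasure N = cdMeasure M := le_antisymm (hM N) (hN M)
  have hprod := cdMeasure_mul_cdMeasure_le M N
  have hinf := hM (M ⊓ N)
  have hsup := hM (M ⊔ N)
  have hpos := cdMeasure_pos M
  rw [hNM] at hprod
  have hinf_eq : cdMeasure (M ⊓ N) = cdMeasure M := by nlinarith
  have hsup_eq : cdMeasure (M ⊔ N) = cdMeasure M := by nlinarith
  exact ⟨fun K => hinf_eq ▸ hM K, fun K => hsup_eq ▸ hM K⟩

instance [Finite G] : Lattice (CD G) :=
  Subtype.lattice (fun _ _ hM hN => (inf_mem_CD_and_sup_mem_CD hM hN).2)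
    (fun _ _ hM hN => (inf_mem_CD_and_sup_mem_CD hM hN).1)

theorem top_mem_CD [Finite G] (hbot : (⊥ : Subgroup G) ∈ CD G) : (⊤ : Subgroup G) ∈ CD G :=
  fun K => (hbot K).trans <| by
    rw [cdMeasure_bot, cdMeasure, card_top]
    exact Nat.le_mul_of_pos_right _ Nat.card_pos

instance [Finite G] [Fact ((⊥ : Subgroup G) ∈ CD G)] : BoundedOrder (CD G) :=
  Subtype.boundedOrder Fact.out (top_mem_CD Fact.out)

theorem CD.isCompl_iff [Finite G] [Fact ((⊥ : Subgroup G) ∈ CD G)] {M N : CD G} :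
    IsCompl M N ↔ IsCompl (M : Subgroup G) N := by
  simp only [_root_.isCompl_iff, disjoint_iff, codisjoint_iff, Subtype.ext_iff]
  rfl

theorem centralizer_centralizer_of_mem_CD [Finite G] {M : Subgroup G} (hM : M ∈ CD G) :
    centralizer (centralizer (M : Set G) : Set G) = M := by
  refine (eq_of_le_of_card_ge (le_centralizer_iff.mp le_rfl) ?_).symm
  have h := hM (centralizer M)
  rw [cdMeasure, cdMeasure, mul_comm (Nat.card M)] at h
  exact Nat.le_of_mul_le_mul_left h Nat.card_pos

theorem left_mem_of_mul_mem_of_mem_CD [Finite G] {M H K : Subgroup G} [H.Normal] [K.Normal]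
    (hM : M ∈ CD G) (hHK : H ⊓ K = ⊥) {h k : G} (hh : h ∈ H) (hk : k ∈ K) (hhk : h * k ∈ M) :
    h ∈ M := by
  rw [← centralizer_centralizer_of_mem_CD hM, mem_centralizer_iff]
  intro x hx
  exact (commute_of_commute_mul hHK hh hk (hx _ hhk).symm).eq

theorem inf_sup_inf_eq_of_mem_CD [Finite G] {M H K : Subgroup G} [H.Normal] [K.Normal]
    (hHK : IsCompl H K) (hM : M ∈ CD G) : M ⊓ H ⊔ M ⊓ K = M := by
  refine le_antisymm (sup_le inf_le_left inf_le_left) fun m hm => ?_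
  obtain ⟨h, hh, k, hk, rfl⟩ : m ∈ (H : Set G) * K := by
    rw [← mul_normal, hHK.sup_eq_top]; trivial
  have hhM := left_mem_of_mul_mem_of_mem_CD hM hHK.inf_eq_bot hh hk hm
  have hkM : k ∈ M := by simpa using mul_mem (inv_mem hhM) hm
  exact mul_mem (mem_sup_left (mem_inf.mpr ⟨hhM, hh⟩)) (mem_sup_right (mem_inf.mpr ⟨hkM, hk⟩))

theorem mem_CD_of_isCompl [Finite G] (hbot : (⊥ : Subgroup G) ∈ CD G) {H K : Subgroup G}
    [H.Normal] [K.Normal] (hHK : IsCompl H K) : H ∈ CD G := fun L => calc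
  cdMeasure L ≤ Nat.card G := cdMeasure_bot (G := G) ▸ hbot L
  _ = Nat.card ↥(H ⊔ K) := by rw [hHK.sup_eq_top, card_top]
  _ ≤ Nat.card H * Nat.card K := card_sup_le_card_mul_card H K
  _ ≤ cdMeasure H := Nat.mul_le_mul_left _ <| card_le_of_le fun k hk h hh =>
      commute_of_normal_of_disjoint H K ‹_› ‹_› hHK.disjoint h k hh hk

theorem normal_of_isCompl_forall_eq [Finite G] [Fact ((⊥ : Subgroup G) ∈ CD G)] {a b : CD G}
    (hab : IsCompl a b) (huniq : ∀ c, IsCompl c b → c = a) : (a : Subgroup G).Normal := by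
  rw [CD.isCompl_iff] at hab
  rw [← normalizer_eq_top_iff, eq_top_iff, ← hab.sup_eq_top]
  refine sup_le le_normalizer fun g hg => mem_normalizer_iff_map_conj_eq.mpr ?_
  have hb := mem_normalizer_iff_map_conj_eq.mp (le_normalizer hg)
  have hc := (MulAut.conj g).mapSubgroup.isCompl hab
  rw [MulEquiv.coe_mapSubgroup] at hc
  exact congrArg Subtype.val (huniq ⟨_, map_mem_CD a.2 (MulAut.conj g)⟩
    (CD.isCompl_iff.mpr (by simpa [hb] using hc)))

end ChermakDelgado

theorem stmt11 {G : Type} [Group G] [Fintype G] (hbot : (⊥ : Subgroup G) ∈ CD G) :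
    (¬ ∃ H K : Subgroup G, H ≠ ⊥ ∧ K ≠ ⊥ ∧ H.Normal ∧ K.Normal ∧
        H ⊓ K = ⊥ ∧ H ⊔ K = ⊤) ↔
    (∀ (L₁ L₂ : Type) [Lattice L₁] [Lattice L₂],
        (↥(CD G) ≃o (L₁ × L₂)) → Subsingleton L₁ ∨ Subsingleton L₂) := by
  have : Fact ((⊥ : Subgroup G) ∈ CD G) := ⟨hbot⟩
  constructor
  · intro hindec L₁ L₂ _ _ e
    by_contra! h
    obtain ⟨_, _⟩ := h
    obtain ⟨a, b, ha, hb, hab, ha_uniq, hb_uniq⟩ := exists_isCompl_unique_of_orderIso_prod e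
    have hab' := CD.isCompl_iff.mp hab
    exact hindec ⟨a, b, fun h => ha (Subtype.ext h), fun h => hb (Subtype.ext h),
      normal_of_isCompl_forall_eq hab ha_uniq,
      normal_of_isCompl_forall_eq hab.symm fun c hc => hb_uniq c hc.symm,
      hab'.inf_eq_bot, hab'.sup_eq_top⟩
  · rintro hlat ⟨H, K, hH, hK, hHn, hKn, hinf, hsup⟩
    have hHK : IsCompl H K := .of_eq hinf hsup
    let a : CD G := ⟨H, mem_CD_of_isCompl hbot hHK⟩
    let b : CD G := ⟨K, mem_CD_of_isCompl hbot hHK.symm⟩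
    obtain h | h := hlat (Set.Iic a) (Set.Iic b) <| orderIsoIicProdIic
      (fun M => Subtype.ext (inf_sup_inf_eq_of_mem_CD hHK M.2))
      (fun A hA B hB => Subtype.ext (sup_inf_eq_of_le_of_le hinf hA hB))
      (fun A hA B hB => Subtype.ext <| by
        show ((A : Subgroup G) ⊔ B) ⊓ K = B
        rw [sup_comm]
        exact sup_inf_eq_of_le_of_le hHK.symm.inf_eq_bot hB hA)
    · exact hH (congrArg (fun x : Set.Iic a => (x : Subgroup G)) (Subsingleton.elim ⊤ ⊥))
    · exact hK (congrArg (fun x : Set.Iic b => (x : Subgroup G)) (Subsingleton.elim ⊤ ⊥))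
end
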